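/- arXiv:1210.2142 — 3 statements merged into one kernel-verified Lean document; each statement's English description precedes it below -/
import Mathlib

section
/- Suppose G is a connected simple graph with no K_5 minor, G is not isomorphic to C_5, G is not dynamically 4-colorable, and |E(G)| is minimum among all graphs with these properties. Then G is 2-connected. -/
/-!
If `v` were a cut vertex, let `A` be a union of components of `G - v` and `B` the other
components. The graphs `G[A + v]` and `G[B + v]` are connected, have no `K₅` minor and have fewer
edges than `G`, so by minimality each is `C₅` or dynamically 4-colourable. Either way each has a
proper 4-colouring that is dynamic everywhere except possibly at `v` (for `C₅` this uses that `v`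
can be chosen as the single bad vertex). Permuting the colours of one side so that the two
colourings agree at `v` but differ on a neighbour of `v` in `A` and one in `B` glues them into a
dynamic 4-colouring of `G`. Finally, a graph on at most four vertices is dynamically 4-colourable
by giving every vertex its own colour.
-/

open SimpleGraph

/-- A dynamic coloring: a proper coloring with `k` colors such that every vertex
with at least two neighbors has two neighbors with distinct colors. -/
def IsDynamicColoring {V : Type} (G : SimpleGraph V) {k : ℕ} (c : V → Fin k) : Prop :=
  (∀ u v : V, G.Adj u v → c u ≠ c v) ∧
    ∀ v : V, 2 ≤ (G.neighborSet v).ncard →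
      ∃ u w : V, G.Adj v u ∧ G.Adj v w ∧ c u ≠ c w

/-- A graph is dynamically `k`-colorable if it admits a dynamic `k`-coloring. -/
def DynamicColorable {V : Type} (G : SimpleGraph V) (k : ℕ) : Prop :=
  ∃ c : V → Fin k, IsDynamicColoring G c
/-- `H` is a minor of `G`: there is a family of nonempty, pairwise disjoint,
connected branch sets in `G`, one for each vertex of `H`, such that branch sets of
adjacent vertices of `H` are joined by an edge of `G`. -/
def HasMinor {V W : Type} (G : SimpleGraph V) (H : SimpleGraph W) : Prop :=
  ∃ B : W → Set V,
    (∀ w : W, (B w).Nonempty) ∧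
      (∀ w : W, (G.induce (B w)).Connected) ∧
        (Pairwise fun w₁ w₂ => Disjoint (B w₁) (B w₂)) ∧
          ∀ ⦃w₁ w₂ : W⦄, H.Adj w₁ w₂ → ∃ u ∈ B w₁, ∃ v ∈ B w₂, G.Adj u v
/-- `G` is a counterexample with the minimum number of edges: `G` is connected,
has no `K₅` minor, is not isomorphic to `C₅`, is not dynamically `4`-colorable,
and has the fewest edges among all finite graphs with these properties. -/
def MinCounterexample {V : Type} [Fintype V] (G : SimpleGraph V) : Prop :=
  G.Connected ∧ ¬ HasMinor G (⊤ : SimpleGraph (Fin 5)) ∧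
    ¬ Nonempty (G ≃g SimpleGraph.cycleGraph 5) ∧ ¬ DynamicColorable G 4 ∧
      ∀ (W : Type) [Fintype W] (H : SimpleGraph W),
        (H.Connected ∧ ¬ HasMinor H (⊤ : SimpleGraph (Fin 5)) ∧
          ¬ Nonempty (H ≃g SimpleGraph.cycleGraph 5) ∧ ¬ DynamicColorable H 4) →
        G.edgeSet.ncard ≤ H.edgeSet.ncard

section DynamicColoring

variable {V W : Type} {k : ℕ}

def IsDynamicColoringAwayFrom (G : SimpleGraph V) (c : V → Fin k) (j : V) : Prop :=
  (∀ u w : V, G.Adj u w → c u ≠ c w) ∧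
    ∀ x : V, x ≠ j → 2 ≤ (G.neighborSet x).ncard →
      ∃ u w : V, G.Adj x u ∧ G.Adj x w ∧ c u ≠ c w

lemma IsDynamicColoring.isDynamicColoringAwayFrom {G : SimpleGraph V} {c : V → Fin k}
    (hc : IsDynamicColoring G c) (j : V) : IsDynamicColoringAwayFrom G c j :=
  ⟨hc.1, fun x _ => hc.2 x⟩

lemma IsDynamicColoringAwayFrom.comp_injective {G : SimpleGraph V} {c : V → Fin k} {j : V}
    {k' : ℕ} {f : Fin k → Fin k'} (hf : Function.Injective f)
    (hc : IsDynamicColoringAwayFrom G c j) : IsDynamicColoringAwayFrom G (f ∘ c) j := by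
  refine ⟨fun u w huw => hf.ne (hc.1 u w huw), fun x hx hdeg => ?_⟩
  obtain ⟨u, w, hu, hw, huw⟩ := hc.2 x hx hdeg
  exact ⟨u, w, hu, hw, hf.ne huw⟩

lemma IsDynamicColoringAwayFrom.comp_iso {G : SimpleGraph V} {H : SimpleGraph W}
    {c : W → Fin k} (φ : G ≃g H) {j : V} (hc : IsDynamicColoringAwayFrom H c (φ j)) :
    IsDynamicColoringAwayFrom G (c ∘ φ) j := by
  refine ⟨fun u w huw => hc.1 _ _ (φ.map_adj_iff.mpr huw), fun x hx hdeg => ?_⟩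
  have hdeg' : 2 ≤ (H.neighborSet (φ x)).ncard := by
    rwa [← φ.image_neighborSet, Set.ncard_image_of_injective _ φ.injective]
  obtain ⟨u, w, hu, hw, huw⟩ := hc.2 (φ x) (φ.injective.ne hx) hdeg'
  refine ⟨φ.symm u, φ.symm w, ?_, ?_, by simpa using huw⟩ <;>
    rw [← φ.map_adj_iff, φ.apply_symm_apply] <;> assumption

lemma dynamicColorable_of_card_le [Fintype V] (G : SimpleGraph V) (h : Fintype.card V ≤ k) :
    DynamicColorable G k := by
  obtain ⟨f⟩ : Nonempty (V ↪ Fin k) :=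
    Function.Embedding.nonempty_of_card_le (by simpa using h)
  refine ⟨f, fun u w huw => f.injective.ne huw.ne, fun x hdeg => ?_⟩
  obtain ⟨u, hu, w, hw, huw⟩ := (Set.one_lt_ncard (s := G.neighborSet x)).mp hdeg
  exact ⟨u, w, hu, hw, f.injective.ne huw⟩

lemma cycleGraph_five_isDynamicColoringAwayFrom (j : Fin 5) :
    IsDynamicColoringAwayFrom (cycleGraph 5) (fun x => (![0, 1, 2, 3, 1] (x - j) : Fin 4)) j := by
  refine ⟨?_, fun x hx hdeg => ?_⟩
  · revert j
    decide
  · clear hdeg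
    revert j x
    decide

lemma exists_isDynamicColoringAwayFrom_of_iso_cycleGraph_five {G : SimpleGraph V}
    (φ : G ≃g cycleGraph 5) (j : V) : ∃ c : V → Fin 4, IsDynamicColoringAwayFrom G c j :=
  ⟨_, (cycleGraph_five_isDynamicColoringAwayFrom (φ j)).comp_iso φ⟩

end DynamicColoring

lemma exists_perm_apply_eq_and_apply_ne {α : Type} [DecidableEq α] [Fintype α]
    (hα : 2 < Fintype.card α) {x z : α} (hxz : x ≠ z) (y w : α) :
    ∃ σ : Equiv.Perm α, σ x = y ∧ σ z ≠ w := by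
  set τ := Equiv.swap x y
  by_cases hτ : τ z = w
  · have hwy : w ≠ y := by
      rw [← hτ, ← Equiv.swap_apply_left x y]
      exact τ.injective.ne hxz.symm
    obtain ⟨t, -, ht⟩ := Finset.exists_mem_notMem_of_card_lt_card
      (s := {y, w}) (t := Finset.univ) (Finset.card_le_two.trans_lt hα)
    simp only [Finset.mem_insert, Finset.mem_singleton, not_or] at ht
    refine ⟨Equiv.swap w t * τ, ?_, ?_⟩
    · simp [τ, Equiv.swap_apply_of_ne_of_ne (Ne.symm hwy) (Ne.symm ht.1)]
    · simp [hτ, ht.2]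
  · exact ⟨τ, Equiv.swap_apply_left x y, hτ⟩

section Induce

variable {V : Type} {G : SimpleGraph V}

noncomputable def induceInduceIso (G : SimpleGraph V) (S : Set V) (T : Set S) :
    (G.induce S).induce T ≃g G.induce (Subtype.val '' T) where
  toEquiv := Equiv.Set.image Subtype.val T Subtype.val_injective
  map_rel_iff' := by simp [Equiv.Set.image_apply]

lemma HasMinor.of_induce {W : Type} {H : SimpleGraph W} {S : Set V}
    (h : HasMinor (G.induce S) H) : HasMinor G H := by
  obtain ⟨B, hne, hconn, hdisj, hadj⟩ := h
  refine ⟨fun w => Subtype.val '' B w, fun w => (hne w).image _,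
    fun w => (induceInduceIso G S (B w)).connected_iff.mp (hconn w),
    fun w₁ w₂ hw => Set.disjoint_image_of_injective Subtype.val_injective (hdisj hw),
    fun w₁ w₂ hw => ?_⟩
  obtain ⟨u, hu, v, hv, huv⟩ := hadj hw
  exact ⟨u, Set.mem_image_of_mem _ hu, v, Set.mem_image_of_mem _ hv, huv⟩

lemma ncard_edgeSet_induce_lt [Finite V] {S : Set V} {a b : V} (hab : G.Adj a b) (hb : b ∉ S) :
    (G.induce S).edgeSet.ncard < G.edgeSet.ncard := by
  set f : G.induce S ↪g G := Embedding.induce S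
  have hsub : Sym2.map f '' (G.induce S).edgeSet ⊂ G.edgeSet := by
    refine (Set.ssubset_iff_of_subset ?_).mpr ⟨s(a, b), hab, ?_⟩
    · rintro _ ⟨e, he, rfl⟩
      exact f.map_mem_edgeSet_iff.mpr he
    · rintro ⟨e, -, he⟩
      obtain ⟨x, -, hx⟩ := Sym2.mem_map.mp (he ▸ Sym2.mem_mk_right a b)
      exact hb (hx ▸ x.2)
  calc (G.induce S).edgeSet.ncard
      = (Sym2.map f '' (G.induce S).edgeSet).ncard :=
        (Set.ncard_image_of_injective _ (Sym2.map.injective f.injective)).symm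
    _ < G.edgeSet.ncard := Set.ncard_lt_ncard hsub

lemma ncard_neighborSet_induce_of_neighborSet_subset {S : Set V} {x : S}
    (hx : G.neighborSet x ⊆ S) :
    ((G.induce S).neighborSet x).ncard = (G.neighborSet x).ncard := by
  rw [neighborSet_induce]
  exact Set.ncard_preimage_of_injective_subset_range Subtype.val_injective (by simpa using hx)

lemma IsDynamicColoringAwayFrom.exists_adj_ne_of_induce {k : ℕ} {S : Set V} {c' : S → Fin k}
    {j : S} (hc' : IsDynamicColoringAwayFrom (G.induce S) c' j) {c : V → Fin k}
    (hc : ∀ x : S, c x = c' x) {x : S} (hxj : x ≠ j) (hx : G.neighborSet x ⊆ S)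
    (hdeg : 2 ≤ (G.neighborSet x).ncard) :
    ∃ u w : V, G.Adj x u ∧ G.Adj x w ∧ c u ≠ c w := by
  rw [← ncard_neighborSet_induce_of_neighborSet_subset hx] at hdeg
  obtain ⟨u, w, hu, hw, huw⟩ := hc'.2 x hxj hdeg
  exact ⟨u, w, hu, hw, by rwa [hc, hc]⟩

end Induce

section CutSide

variable {V : Type} {G : SimpleGraph V} {v : V} {A : Set V}

/-- `A` is a union of connected components of `G - v`. -/
def IsCutSide (G : SimpleGraph V) (v : V) (A : Set V) : Prop :=
  v ∉ A ∧ ∀ ⦃x y : V⦄, x ∈ A → G.Adj x y → y ≠ v → y ∈ A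

lemma exists_isCutSide_of_not_preconnected (h : ¬ (G.induce {v}ᶜ).Preconnected) :
    ∃ A : Set V, IsCutSide G v A ∧ A.Nonempty ∧ (insert v A)ᶜ.Nonempty := by
  simp only [Preconnected, not_forall] at h
  obtain ⟨⟨a, ha⟩, ⟨b, hb⟩, hab⟩ := h
  refine ⟨{x | ∃ hx : x ≠ v, (G.induce {v}ᶜ).Reachable ⟨a, ha⟩ ⟨x, hx⟩},
    ⟨fun ⟨hv, _⟩ => hv rfl,
      fun x y ⟨_, hx⟩ hxy hyv => ⟨hyv, hx.trans (Adj.reachable hxy)⟩⟩,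
    ⟨a, ha, .rfl⟩, ⟨b, ?_⟩⟩
  rintro (rfl | ⟨_, hb'⟩)
  · exact hb rfl
  · exact hab hb'

namespace IsCutSide

lemma neighborSet_subset (hA : IsCutSide G v A) {x : V} (hx : x ∈ A) :
    G.neighborSet x ⊆ insert v A := fun y hxy =>
  (eq_or_ne y v).imp id (hA.2 hx hxy)

lemma compl_insert (hA : IsCutSide G v A) : IsCutSide G v (insert v A)ᶜ := by
  refine ⟨fun hv => hv (Set.mem_insert v A), fun x y hx hxy hyv hy => hx ?_⟩
  exact hA.neighborSet_subset ((Set.mem_insert_iff.mp hy).resolve_left hyv) hxy.symm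

lemma reachable_of_walk (hA : IsCutSide G v A) {x w : V} (hx : x ∈ A) (p : G.Walk x w)
    (hw : w ∉ A) :
    (G.induce (insert v A)).Reachable ⟨x, Set.mem_insert_of_mem v hx⟩
      ⟨v, Set.mem_insert v A⟩ := by
  induction p with
  | nil => exact absurd hx hw
  | @cons x y _ hxy q ih =>
    by_cases hyv : y = v
    · subst hyv
      exact Adj.reachable (G := G.induce _) (u := ⟨x, _⟩) hxy
    · have hy : y ∈ A := hA.2 hx hxy hyv
      exact (Adj.reachable (G := G.induce _) (u := ⟨x, _⟩)
        (v := ⟨y, Set.mem_insert_of_mem v hy⟩) hxy).trans (ih hy hw)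

lemma connected_induce_insert (hA : IsCutSide G v A) (hG : G.Connected) :
    (G.induce (insert v A)).Connected := by
  refine (connected_iff_exists_forall_reachable _).mpr ⟨⟨v, Set.mem_insert v A⟩, ?_⟩
  rintro ⟨x, rfl | hx⟩
  · rfl
  · exact (hA.reachable_of_walk hx (hG.preconnected x v).some hA.1).symm

lemma exists_adj (hA : IsCutSide G v A) (hG : G.Connected) (hA' : A.Nonempty) :
    ∃ u ∈ A, G.Adj v u := by
  obtain ⟨a, ha⟩ := hA'
  have hva : v ≠ a := fun h => hA.1 (h ▸ ha)
  obtain ⟨⟨u, hu⟩, hvu⟩ := ((hA.connected_induce_insert hG).preconnected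
    ⟨v, Set.mem_insert v A⟩ ⟨a, Set.mem_insert_of_mem v ha⟩).nonempty_neighborSet_left
    (Subtype.coe_ne_coe.mp hva)
  exact ⟨u, (Set.mem_insert_iff.mp hu).resolve_left hvu.ne', hvu⟩

lemma dynamicColorable_of_isDynamicColoringAwayFrom (hA : IsCutSide G v A) {k : ℕ}
    {c₁ : ↥(insert v A) → Fin k} {c₂ : ↥(insert v (insert v A)ᶜ) → Fin k}
    (hc₁ : IsDynamicColoringAwayFrom (G.induce _) c₁ ⟨v, Set.mem_insert v A⟩)
    (hc₂ : IsDynamicColoringAwayFrom (G.induce _) c₂ ⟨v, Set.mem_insert v _⟩)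
    (hv : c₁ ⟨v, Set.mem_insert v A⟩ = c₂ ⟨v, Set.mem_insert v _⟩)
    {u₁ u₂ : V} (hu₁ : u₁ ∈ A) (hu₂ : u₂ ∈ (insert v A)ᶜ)
    (hvu₁ : G.Adj v u₁) (hvu₂ : G.Adj v u₂)
    (hne : c₁ ⟨u₁, Set.mem_insert_of_mem v hu₁⟩ ≠
      c₂ ⟨u₂, Set.mem_insert_of_mem v hu₂⟩) :
    DynamicColorable G k := by
  classical
  have hB := hA.compl_insert
  have hmem₂ : ∀ x, x ∉ A → x ∈ insert v (insert v A)ᶜ := fun x hx =>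
    or_iff_not_imp_left.mpr fun hxv h => h.elim hxv hx
  let c : V → Fin k := fun x =>
    if hx : x ∈ A then c₁ ⟨x, Set.mem_insert_of_mem v hx⟩ else c₂ ⟨x, hmem₂ x hx⟩
  have hc₁' : ∀ x : ↥(insert v A), c x = c₁ x := by
    rintro ⟨x, rfl | hx⟩
    · exact (dif_neg hA.1).trans hv.symm
    · exact dif_pos hx
  have hc₂' : ∀ x : ↥(insert v (insert v A)ᶜ), c x = c₂ x := by
    rintro ⟨x, hx⟩
    refine dif_neg fun hxA => ?_
    rcases hx with rfl | hx
    exacts [hA.1 hxA, hx (Set.mem_insert_of_mem v hxA)]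
  refine ⟨c, fun x y hxy => ?_, fun x hdeg => ?_⟩
  · by_cases hx : x ∈ A
    · have hy := hA.neighborSet_subset hx hxy
      rw [hc₁' ⟨x, Set.mem_insert_of_mem v hx⟩, hc₁' ⟨y, hy⟩]
      exact hc₁.1 _ _ hxy
    by_cases hy : y ∈ A
    · have hx' := hA.neighborSet_subset hy hxy.symm
      rw [hc₁' ⟨x, hx'⟩, hc₁' ⟨y, Set.mem_insert_of_mem v hy⟩]
      exact hc₁.1 _ _ hxy
    rw [hc₂' ⟨x, hmem₂ x hx⟩, hc₂' ⟨y, hmem₂ y hy⟩]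
    exact hc₂.1 _ _ hxy
  by_cases hxv : x = v
  · subst hxv
    refine ⟨u₁, u₂, hvu₁, hvu₂, ?_⟩
    rwa [hc₁' ⟨u₁, _⟩, hc₂' ⟨u₂, _⟩]
  by_cases hx : x ∈ A
  · exact hc₁.exists_adj_ne_of_induce hc₁' (x := ⟨x, Set.mem_insert_of_mem v hx⟩)
      (Subtype.coe_ne_coe.mp hxv) (hA.neighborSet_subset hx) hdeg
  · have hxB : x ∈ (insert v A)ᶜ := fun h => h.elim hxv hx
    exact hc₂.exists_adj_ne_of_induce hc₂' (x := ⟨x, Set.mem_insert_of_mem v hxB⟩)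
      (Subtype.coe_ne_coe.mp hxv) (hB.neighborSet_subset hxB) hdeg

end IsCutSide

end CutSide

namespace MinCounterexample

variable {V : Type} [Fintype V] {G : SimpleGraph V}

lemma exists_isDynamicColoringAwayFrom_induce (hG : MinCounterexample G) {S : Set V}
    (hS : (G.induce S).Connected) (hlt : (G.induce S).edgeSet.ncard < G.edgeSet.ncard) (j : S) :
    ∃ c : S → Fin 4, IsDynamicColoringAwayFrom (G.induce S) c j := by
  classical
  by_cases hC₅ : Nonempty (G.induce S ≃g cycleGraph 5)
  · exact exists_isDynamicColoringAwayFrom_of_iso_cycleGraph_five hC₅.some j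
  by_cases hdyn : DynamicColorable (G.induce S) 4
  · obtain ⟨c, hc⟩ := hdyn
    exact ⟨c, hc.isDynamicColoringAwayFrom j⟩
  exact absurd (hG.2.2.2.2 S (G.induce S) ⟨hS, fun h => hG.2.1 h.of_induce, hC₅, hdyn⟩)
    hlt.not_ge

lemma dynamicColorable_of_isCutSide (hG : MinCounterexample G) {v : V} {A : Set V}
    (hA : IsCutSide G v A) (hA₁ : A.Nonempty) (hA₂ : (insert v A)ᶜ.Nonempty) :
    DynamicColorable G 4 := by
  obtain ⟨u₁, hu₁, hvu₁⟩ := hA.exists_adj hG.1 hA₁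
  obtain ⟨u₂, hu₂, hvu₂⟩ := hA.compl_insert.exists_adj hG.1 hA₂
  have hu₁' : u₁ ∉ insert v (insert v A)ᶜ := fun h =>
    h.elim hvu₁.ne' (· (Set.mem_insert_of_mem v hu₁))
  obtain ⟨c₁, hc₁⟩ := hG.exists_isDynamicColoringAwayFrom_induce
    (hA.connected_induce_insert hG.1) (ncard_edgeSet_induce_lt hvu₂ hu₂)
    ⟨v, Set.mem_insert v A⟩
  obtain ⟨c₂, hc₂⟩ := hG.exists_isDynamicColoringAwayFrom_induce
    (hA.compl_insert.connected_induce_insert hG.1) (ncard_edgeSet_induce_lt hvu₁ hu₁')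
    ⟨v, Set.mem_insert v _⟩
  obtain ⟨σ, hσv, hσu⟩ := exists_perm_apply_eq_and_apply_ne (by simp)
    (hc₂.1 ⟨v, Set.mem_insert v _⟩ ⟨u₂, Set.mem_insert_of_mem v hu₂⟩ hvu₂)
    (c₁ ⟨v, Set.mem_insert v A⟩) (c₁ ⟨u₁, Set.mem_insert_of_mem v hu₁⟩)
  exact hA.dynamicColorable_of_isDynamicColoringAwayFrom hc₁ (hc₂.comp_injective σ.injective)
    hσv.symm hu₁ hu₂ hvu₁ hvu₂ (Ne.symm hσu)

end MinCounterexample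

/-- A minimum counterexample is `2`-connected: it has more than two vertices and
deleting any single vertex leaves a connected graph. -/
theorem min_counterexample_two_connected {V : Type} [Fintype V] (G : SimpleGraph V)
    (hG : MinCounterexample G) :
    2 < Fintype.card V ∧ ∀ v : V, (G.induce ({v}ᶜ : Set V)).Connected := by
  have hdyn : ¬ DynamicColorable G 4 := hG.2.2.2.1
  have hcard : 2 < Fintype.card V := by
    by_contra h
    exact hdyn (dynamicColorable_of_card_le G (by omega))
  refine ⟨hcard, fun v => ?_⟩
  obtain ⟨u, hu⟩ := Fintype.exists_ne_of_one_lt_card (by omega) v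
  refine (connected_iff _).mpr ⟨?_, ⟨⟨u, hu⟩⟩⟩
  by_contra h
  obtain ⟨A, hA, hA₁, hA₂⟩ := exists_isCutSide_of_not_preconnected h
  exact hdyn (hG.dynamicColorable_of_isCutSide hA hA₁ hA₂)
end

section
/- Let k ≥ 1 be an integer and let G be a simple graph such that every topological minor of G has a vertex of degree at most k. Then G is dynamically (k+3)-colorable. -/
/-!
Induction on the number of vertices. A vertex `v` of minimum degree `d` has `d ≤ k`, by the
hypothesis applied to `G` itself. Choose neighbours `x ≠ y` of `v` if `d ≥ 2` (otherwise `x = y`,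
so that `edge x y = ⊥`) and pass to `G' = (G - v) + xy`. A subdivision embedded in `G'` becomes
one embedded in `G` after subdividing the edge `xy` through `v`, so `G'` inherits the hypothesis
and is dynamically `(k + 3)`-colourable. Colour `v` avoiding the colours of its `d` neighbours and
of one further neighbour of each of `x` and `y`. Then `x` and `y`, adjacent in `G'`, serve `v`;
`v` and that further neighbour serve `x` and `y`; any other neighbour of `v` has degree at least
`d ≥ 3`, so it keeps two neighbours in `G'`, all of them neighbours in `G`.
-/

open SimpleGraph

/-- The graph obtained from `G` by subdividing the edge `uv` once: the edge `uv` is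
removed and the new vertex `Fin.last n` is joined to `u` and `v`. -/
def subdivideEdge {n : ℕ} (G : SimpleGraph (Fin n)) (u v : Fin n) :
    SimpleGraph (Fin (n + 1)) :=
  SimpleGraph.fromRel fun a b =>
    (∃ x y : Fin n, a = x.castSucc ∧ b = y.castSucc ∧ G.Adj x y ∧ s(x, y) ≠ s(u, v)) ∨
      (a = Fin.last n ∧ (b = u.castSucc ∨ b = v.castSucc))

/-- `IsSubdivision H G` means `G` is obtained from `H` by repeatedly subdividing edges. -/
inductive IsSubdivision : {n m : ℕ} → SimpleGraph (Fin n) → SimpleGraph (Fin m) → Prop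
  | refl {n : ℕ} (G : SimpleGraph (Fin n)) : IsSubdivision G G
  | step {n m : ℕ} {H : SimpleGraph (Fin n)} {G : SimpleGraph (Fin m)} {u v : Fin m}
      (huv : G.Adj u v) (h : IsSubdivision H G) : IsSubdivision H (subdivideEdge G u v)

/-- `H` is a topological minor of `G` if `G` has a subgraph isomorphic to a
subdivision of `H`, i.e. some subdivision of (a copy of) `H` admits an injective
graph homomorphism into `G`. -/
def IsTopologicalMinor {W V : Type} [Fintype W] (H : SimpleGraph W) (G : SimpleGraph V) :
    Prop :=
  ∃ (n m : ℕ) (H' : SimpleGraph (Fin n)) (S : SimpleGraph (Fin m)),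
    Nonempty (H ≃g H') ∧ IsSubdivision H' S ∧ ∃ f : S →g G, Function.Injective f

section

variable {V W : Type} {α : Type*}

def IsTopologicallyDegenerate (G : SimpleGraph V) (k : ℕ) : Prop :=
  ∀ (n : ℕ) (H : SimpleGraph (Fin (n + 1))),
    IsTopologicalMinor H G → ∃ v : Fin (n + 1), (H.neighborSet v).ncard ≤ k

theorem SimpleGraph.Embedding.isTopologicalMinor [Fintype W] {H : SimpleGraph W}
    {G : SimpleGraph V} (f : H ↪g G) : IsTopologicalMinor H G :=
  let e := Iso.map (Fintype.equivFin W) H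
  let f' := f.comp e.symm.toEmbedding
  ⟨_, _, _, _, ⟨e⟩, .refl _, f'.toHom, f'.injective⟩

theorem IsTopologicallyDegenerate.exists_ncard_neighborSet_le [Fintype V] [Nonempty V]
    {G : SimpleGraph V} {k : ℕ} (h : IsTopologicallyDegenerate G k) :
    ∃ v, (G.neighborSet v).ncard ≤ k := by
  obtain ⟨n, hn⟩ := Nat.exists_eq_add_one.mpr (Fintype.card_pos (α := V))
  let e := (Iso.map (Fintype.equivFinOfCardEq hn) G).symm
  obtain ⟨w, hw⟩ := h n _ e.toEmbedding.isTopologicalMinor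
  refine ⟨e w, ?_⟩
  rwa [← e.image_neighborSet, Set.ncard_image_of_injective _ e.injective]

theorem exists_injective_hom_subdivideEdge {m : ℕ} {S : SimpleGraph (Fin m)} {G : SimpleGraph V}
    {a b : Fin m} {g : Fin m → V} {v : V} (hg : Function.Injective g) (hv : v ∉ Set.range g)
    (hS : ∀ p q, S.Adj p q → s(p, q) ≠ s(a, b) → G.Adj (g p) (g q))
    (ha : G.Adj v (g a)) (hb : G.Adj v (g b)) :
    ∃ f : subdivideEdge S a b →g G, Function.Injective f := by
  let f : Fin (m + 1) → V := Fin.snoc g v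
  have hf : ∀ p q, (∃ x y : Fin m, p = x.castSucc ∧ q = y.castSucc ∧ S.Adj x y ∧
      s(x, y) ≠ s(a, b)) ∨ (p = Fin.last m ∧ (q = a.castSucc ∨ q = b.castSucc)) →
      G.Adj (f p) (f q) := by
    rintro p q (⟨x, y, rfl, rfl, hxy, hne⟩ | ⟨rfl, rfl | rfl⟩) <;>
      simp only [f, Fin.snoc_castSucc, Fin.snoc_last]
    exacts [hS x y hxy hne, ha, hb]
  refine ⟨⟨f, fun {p q} hpq => ?_⟩, Fin.snoc_injective_of_injective hg hv⟩
  rcases (fromRel_adj _ p q).mp hpq with ⟨-, hpq | hqp⟩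
  exacts [hf p q hpq, (hf q p hqp).symm]

theorem IsSubdivision.exists_injective_hom_of_sup_edge {n m : ℕ} {H' : SimpleGraph (Fin n)}
    {S : SimpleGraph (Fin m)} (hsub : IsSubdivision H' S) {G : SimpleGraph V} {v x y : V}
    (hxy : x = y ∨ G.Adj v x ∧ G.Adj v y) {g : Fin m → V} (hg : Function.Injective g)
    (hv : v ∉ Set.range g) (hS : ∀ p q, S.Adj p q → (G ⊔ edge x y).Adj (g p) (g q)) :
    ∃ (m' : ℕ) (S' : SimpleGraph (Fin m')), IsSubdivision H' S' ∧
      ∃ f : S' →g G, Function.Injective f := by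
  have hS' : ∀ p q, S.Adj p q →
      G.Adj (g p) (g q) ∨ g p = x ∧ g q = y ∨ g p = y ∧ g q = x :=
    fun p q hpq => ((sup_adj ..).mp (hS p q hpq)).imp_right fun h => ((edge_adj ..).mp h).1
  by_cases hmap : ∃ a b, S.Adj a b ∧ g a = x ∧ g b = y
  · obtain ⟨a, b, hab, rfl, rfl⟩ := hmap
    obtain ⟨hva, hvb⟩ := hxy.resolve_left (hg.ne hab.ne)
    refine ⟨m + 1, _, hsub.step hab, exists_injective_hom_subdivideEdge hg hv
      (fun p q hpq hne => (hS' p q hpq).resolve_right ?_) hva hvb⟩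
    rintro (⟨hpa, hqb⟩ | ⟨hpb, hqa⟩)
    exacts [hne (by rw [hg hpa, hg hqb]), hne (by rw [hg hpb, hg hqa, Sym2.eq_swap])]
  · refine ⟨m, S, hsub, ⟨g, fun {p q} hpq => (hS' p q hpq).resolve_right ?_⟩, hg⟩
    rintro (⟨hpx, hqy⟩ | ⟨hpy, hqx⟩)
    exacts [hmap ⟨p, q, hpq, hpx, hqy⟩, hmap ⟨q, p, hpq.symm, hqx, hpy⟩]

theorem IsTopologicalMinor.of_induce_sup_edge [Fintype W] {H : SimpleGraph W}
    {G : SimpleGraph V} {v x y : V} (hxy : x = y ∨ G.Adj v x ∧ G.Adj v y)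
    (h : IsTopologicalMinor H ((G ⊔ edge x y).induce {v}ᶜ)) : IsTopologicalMinor H G := by
  obtain ⟨n, m, H', S, hiso, hsub, f, hf⟩ := h
  obtain ⟨m', S', hsub', hS'⟩ := hsub.exists_injective_hom_of_sup_edge hxy
    (Subtype.val_injective.comp hf) (fun ⟨z, hz⟩ => (f z).2 hz) fun _ _ hpq => f.map_rel hpq
  exact ⟨n, m', H', S', hiso, hsub', hS'⟩

theorem IsTopologicallyDegenerate.induce_sup_edge {G : SimpleGraph V} {k : ℕ} {v x y : V}
    (h : IsTopologicallyDegenerate G k) (hxy : x = y ∨ G.Adj v x ∧ G.Adj v y) :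
    IsTopologicallyDegenerate ((G ⊔ edge x y).induce {v}ᶜ) k :=
  fun n H hH => h n H (hH.of_induce_sup_edge hxy)

theorem SimpleGraph.exists_pair_covering_neighborSet [Finite V] (G : SimpleGraph V) (v : V) :
    ∃ x y, (x = y ∨ G.Adj v x ∧ G.Adj v y) ∧ (2 ≤ (G.neighborSet v).ncard → x ≠ y) ∧
      ∀ w, G.Adj v w → w = x ∨ w = y ∨ 3 ≤ (G.neighborSet v).ncard := by
  obtain hd | hd | hd : (G.neighborSet v).ncard ≤ 1 ∨ (G.neighborSet v).ncard = 2 ∨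
    3 ≤ (G.neighborSet v).ncard := by omega
  · have : Nonempty V := ⟨v⟩
    obtain ⟨x, hx⟩ := (Set.ncard_le_one_iff_subset_singleton (s := G.neighborSet v)).mp hd
    exact ⟨x, x, .inl rfl, by omega, fun w hw => .inl (hx hw)⟩
  · obtain ⟨x, y, hxy, hN⟩ := Set.ncard_eq_two.mp hd
    have hN' : ∀ w, G.Adj v w ↔ w = x ∨ w = y := fun w => by
      rw [← mem_neighborSet, hN, Set.mem_insert_iff, Set.mem_singleton_iff]
    exact ⟨x, y, .inr ⟨(hN' x).mpr (.inl rfl), (hN' y).mpr (.inr rfl)⟩, fun _ => hxy,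
      fun w hw => ((hN' w).mp hw).imp_right .inl⟩
  · obtain ⟨x, y, hx, hy, hxy⟩ := (Set.one_lt_ncard_iff (s := G.neighborSet v)).mp (by omega)
    exact ⟨x, y, .inr ⟨hx, hy⟩, fun _ => hxy, fun _ _ => .inr (.inr hd)⟩

theorem SimpleGraph.ncard_neighborSet_inter_le [Finite V] {G : SimpleGraph V} {s : Set V}
    {H : SimpleGraph s} (hGH : G.induce s ≤ H) (w : s) :
    (G.neighborSet w ∩ s).ncard ≤ (H.neighborSet w).ncard := by
  rw [← Set.ncard_image_of_injective _ Subtype.val_injective]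
  exact Set.ncard_le_ncard fun u ⟨hwu, hu⟩ => ⟨⟨u, hu⟩, hGH hwu, rfl⟩

theorem exists_fin_notMem_image [Finite α] {n : ℕ} (f : α → Fin n) {s : Set α}
    (hs : s.ncard < n) : ∃ γ, γ ∉ f '' s := by
  obtain ⟨γ, -, hγ⟩ := Set.exists_mem_notMem_of_ncard_lt_ncard (s := f '' s) (t := Set.univ)
    (by rw [Set.ncard_univ, Nat.card_eq_fintype_card, Fintype.card_fin]
        exact (Set.ncard_image_le (Set.toFinite s)).trans_lt hs)
  exact ⟨γ, hγ⟩

theorem exists_extension_avoiding [Finite V] {G : SimpleGraph V} {v : V} (x y : V) {n : ℕ}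
    (c : ({v}ᶜ : Set V) → Fin n) (hn : (G.neighborSet v).ncard + 2 < n) :
    ∃ c' : V → Fin n, (∀ a : ({v}ᶜ : Set V), c' a = c a) ∧
      (∀ a : ({v}ᶜ : Set V), G.Adj v a → c' a ≠ c' v) ∧
      ∀ w, (w = x ∨ w = y) → 2 ≤ (G.neighborSet w).ncard →
        ∃ a, G.Adj w a ∧ c' a ≠ c' v := by
  have : Nonempty V := ⟨v⟩
  let u w := Classical.epsilon fun a => G.Adj w a ∧ a ≠ v
  have hu : ∀ w, 2 ≤ (G.neighborSet w).ncard → G.Adj w (u w) ∧ u w ≠ v := fun w hw =>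
    Classical.epsilon_spec (Set.exists_ne_of_one_lt_ncard hw v)
  let S := G.neighborSet v ∪ {u x, u y}
  obtain ⟨γ, hγ⟩ := exists_fin_notMem_image c (s := Subtype.val ⁻¹' S) <| calc
    (Subtype.val ⁻¹' S).ncard = (Subtype.val '' (Subtype.val ⁻¹' S)).ncard :=
      (Set.ncard_image_of_injective _ Subtype.val_injective).symm
    _ ≤ (G.neighborSet v).ncard + ({u x, u y} : Set V).ncard :=
      (Set.ncard_le_ncard (Set.image_preimage_subset _ _)).trans (Set.ncard_union_le _ _)
    _ < n := by
      have := Set.ncard_insert_le (u x) {u y}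
      rw [Set.ncard_singleton] at this
      omega
  let c' := Function.extend Subtype.val c fun _ => γ
  have hc' : ∀ a : ({v}ᶜ : Set V), c' a = c a := Subtype.val_injective.extend_apply c _
  have hc'v : c' v = γ := Function.extend_apply' _ _ _ fun ⟨a, ha⟩ => a.2 ha
  have hγS : ∀ a : ({v}ᶜ : Set V), ↑a ∈ S → c' a ≠ c' v := by
    rintro a ha h
    rw [hc', hc'v] at h
    exact hγ ⟨a, ha, h⟩
  refine ⟨c', hc', fun a ha => hγS a (.inl ha), fun w hw h2 => ?_⟩
  obtain ⟨hwu, huv⟩ := hu w h2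
  refine ⟨u w, hwu, hγS ⟨u w, huv⟩ (.inr ?_)⟩
  rcases hw with rfl | rfl <;> simp

theorem adj_ne_of_induce_le {β : Type*} {G : SimpleGraph V} {v : V}
    {H : SimpleGraph ({v}ᶜ : Set V)} {c : V → β} (hGH : G.induce {v}ᶜ ≤ H)
    (hc : ∀ a b : ({v}ᶜ : Set V), H.Adj a b → c a ≠ c b)
    (hv : ∀ a : ({v}ᶜ : Set V), G.Adj v a → c a ≠ c v) (a b : V) (hab : G.Adj a b) :
    c a ≠ c b := by
  rcases eq_or_ne a v with rfl | ha
  · exact (hv ⟨b, hab.ne'⟩ hab).symm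
  rcases eq_or_ne b v with rfl | hb
  · exact hv ⟨a, ha⟩ hab.symm
  exact hc ⟨a, ha⟩ ⟨b, hb⟩ (hGH hab)

theorem exists_adj_ne_of_induce_sup_edge [Finite V] {G : SimpleGraph V} {v x y : V} {n : ℕ}
    {c : V → Fin n} (hc : IsDynamicColoring ((G ⊔ edge x y).induce {v}ᶜ) fun a => c a)
    (hxy : x = y ∨ G.Adj v x ∧ G.Adj v y) (h2 : 2 ≤ (G.neighborSet v).ncard → x ≠ y)
    (hcover : ∀ w, G.Adj v w → w ≠ x → w ≠ y → 3 ≤ (G.neighborSet w).ncard)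
    (hxyv : ∀ w, (w = x ∨ w = y) → 2 ≤ (G.neighborSet w).ncard →
      ∃ a, G.Adj w a ∧ c a ≠ c v)
    (w : V) (hw : 2 ≤ (G.neighborSet w).ncard) :
    ∃ a b, G.Adj w a ∧ G.Adj w b ∧ c a ≠ c b := by
  rcases eq_or_ne w v with rfl | hwv
  · obtain ⟨hvx, hvy⟩ := hxy.resolve_left (h2 hw)
    exact ⟨x, y, hvx, hvy, hc.1 ⟨x, hvx.ne'⟩ ⟨y, hvy.ne'⟩ (by simp [edge_adj, h2 hw])⟩
  lift w to ({v}ᶜ : Set V) using hwv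
  by_cases hspecial : G.Adj v w ∧ (↑w = x ∨ ↑w = y)
  · obtain ⟨a, hwa, hca⟩ := hxyv w hspecial.2 hw
    exact ⟨v, a, hspecial.1.symm, hwa, hca.symm⟩
  have hHG : ∀ a, ((G ⊔ edge x y).induce {v}ᶜ).Adj w a → G.Adj w a := by
    intro a h
    simp only [comap_adj, Function.Embedding.subtype_apply, sup_adj, edge_adj] at h
    rcases h with h | ⟨h, hne⟩
    · exact h
    obtain ⟨hvx, hvy⟩ := hxy.resolve_left fun hxy' => hne <| by
      rcases h with ⟨hw₁, ha₁⟩ | ⟨hw₁, ha₁⟩ <;> rw [hw₁, ha₁, hxy']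
    exact absurd ⟨h.elim (fun h => h.1 ▸ hvx) (fun h => h.1 ▸ hvy), h.imp And.left And.left⟩
      hspecial
  have hN : 2 ≤ (G.neighborSet w \ {v}).ncard := by
    by_cases hvw : G.Adj v w
    · have := hcover w hvw (hspecial ⟨hvw, .inl ·⟩) (hspecial ⟨hvw, .inr ·⟩)
      rw [Set.ncard_sdiff_singleton_of_mem (show v ∈ G.neighborSet w from hvw.symm)]
      omega
    · rwa [Set.sdiff_singleton_eq_self fun h => hvw h.symm]
  obtain ⟨a, b, ha, hb, hab⟩ := hc.2 w <| hN.trans <| by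
    simpa only [← Set.sdiff_eq] using ncard_neighborSet_inter_le (comap_monotone _ le_sup_left) w
  exact ⟨a, b, hHG a ha, hHG b hb, hab⟩

theorem dynamicColorable_of_induce_sup_edge [Finite V] {G : SimpleGraph V} {v x y : V} {n : ℕ}
    (hcol : DynamicColorable ((G ⊔ edge x y).induce {v}ᶜ) n)
    (hn : (G.neighborSet v).ncard + 2 < n) (hxy : x = y ∨ G.Adj v x ∧ G.Adj v y)
    (h2 : 2 ≤ (G.neighborSet v).ncard → x ≠ y)
    (hcover : ∀ w, G.Adj v w → w ≠ x → w ≠ y → 3 ≤ (G.neighborSet w).ncard) :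
    DynamicColorable G n := by
  obtain ⟨c, hc⟩ := hcol
  obtain ⟨c', hc'c, hv, hxyv⟩ := exists_extension_avoiding x y c hn
  obtain rfl : (fun a : ({v}ᶜ : Set V) => c' a) = c := funext hc'c
  exact ⟨c', adj_ne_of_induce_le (comap_monotone _ le_sup_left) hc.1 hv,
    exists_adj_ne_of_induce_sup_edge hc hxy h2 hcover hxyv⟩

theorem IsTopologicallyDegenerate.dynamicColorable [Fintype V] {G : SimpleGraph V} {k : ℕ}
    (h : IsTopologicallyDegenerate G k) : DynamicColorable G (k + 3) := by
  induction hN : Fintype.card V using Nat.strong_induction_on generalizing V with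
  | _ N ih =>
  rcases isEmpty_or_nonempty V with hV | hV
  · exact ⟨isEmptyElim, isEmptyElim, isEmptyElim⟩
  classical
  obtain ⟨v, hv⟩ := Finite.exists_min fun w => (G.neighborSet w).ncard
  obtain ⟨w, hwk⟩ := h.exists_ncard_neighborSet_le
  obtain ⟨x, y, hxy, h2, hcover⟩ := G.exists_pair_covering_neighborSet v
  have hcard : Fintype.card ({v}ᶜ : Set V) < N :=
    hN ▸ Fintype.card_subtype_lt (x := v) (by simp)
  refine dynamicColorable_of_induce_sup_edge (ih _ hcard (h.induce_sup_edge hxy) rfl)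
    (by have := hv w; omega) hxy h2 fun u hvu hux huy => ?_
  exact (((hcover u hvu).resolve_left hux).resolve_left huy).trans (hv u)

end

theorem dynamic_colorable_of_topological_minor_degree_general {V : Type} [Fintype V]
    (G : SimpleGraph V) (k : ℕ)
    (h : ∀ (n : ℕ) (H : SimpleGraph (Fin (n + 1))),
      IsTopologicalMinor H G → ∃ v : Fin (n + 1), (H.neighborSet v).ncard ≤ k) :
    DynamicColorable G (k + 3) :=
  IsTopologicallyDegenerate.dynamicColorable h

/-- If every (nonempty) topological minor of `G` has a vertex of degree at most `k`,
then `G` is dynamically `(k + 3)`-colorable. -/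
theorem dynamic_colorable_of_topological_minor_degree {V : Type} [Fintype V]
    (G : SimpleGraph V) (k : ℕ) (hk : 1 ≤ k)
    (h : ∀ (n : ℕ) (H : SimpleGraph (Fin (n + 1))),
      IsTopologicalMinor H G → ∃ v : Fin (n + 1), (H.neighborSet v).ncard ≤ k) :
    DynamicColorable G (k + 3) :=
  dynamic_colorable_of_topological_minor_degree_general G k h
end

section
/- For every n ≥ 1, if G is the graph obtained from the complete graph K_n by subdividing every edge exactly once, then the dynamic chromatic number of G is at least n (while G is 2-degenerate). -/
open SimpleGraph

/-- The dynamic chromatic number: the least `k` such that `G` is dynamically `k`-colorable. -/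
noncomputable def dynamicChromaticNumber {V : Type} (G : SimpleGraph V) : ℕ :=
  sInf {k : ℕ | DynamicColorable G k}

/-- The graph obtained from the complete graph `K n` by subdividing every edge exactly
once: its vertices are the `n` original vertices together with one vertex for each
edge of `K n`, a subdivision vertex being adjacent exactly to the two ends of its edge. -/
def subdividedComplete (n : ℕ) :
    SimpleGraph (Fin n ⊕ {p : Fin n × Fin n // p.1 < p.2}) :=
  SimpleGraph.fromRel fun a b =>
    match a, b with
    | Sum.inl v, Sum.inr e => v = e.val.1 ∨ v = e.val.2
    | _, _ => False

/-!
Every subdivision vertex has exactly the two ends of its edge as neighbors, so a dynamic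
coloring must give those two original vertices different colors. Hence the original vertices of
the subdivided `K n` receive pairwise distinct colors, which forces at least `n` colors.
Two-degeneracy holds because every edge has a subdivision vertex, of degree two, as an endpoint.
-/

section DynamicColoring

variable {V : Type} {G : SimpleGraph V}

lemma isDynamicColoring_of_injective {k : ℕ} {c : V → Fin k} (hc : Function.Injective c) :
    IsDynamicColoring G c := by
  refine ⟨fun u v huv h => huv.ne (hc h), fun v hv => ?_⟩
  obtain ⟨a, ha, b, hb, hab⟩ := (Set.one_lt_ncard (Set.finite_of_ncard_pos (by omega))).mp hv
  exact ⟨a, b, ha, hb, hc.ne hab⟩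

lemma exists_dynamicColorable [Finite V] (G : SimpleGraph V) : ∃ k, DynamicColorable G k := by
  obtain ⟨k, ⟨e⟩⟩ := Finite.exists_equiv_fin V
  exact ⟨k, e, isDynamicColoring_of_injective e.injective⟩

lemma le_dynamicChromaticNumber [Finite V] {m : ℕ}
    (h : ∀ k (c : V → Fin k), IsDynamicColoring G c → m ≤ k) :
    m ≤ dynamicChromaticNumber G :=
  le_csInf (exists_dynamicColorable G) fun _ ⟨c, hc⟩ => h _ c hc

lemma IsDynamicColoring.ne_of_neighborSet_eq_pair {k : ℕ} {c : V → Fin k}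
    (hc : IsDynamicColoring G c) {u v w : V} (hv : G.neighborSet v = {u, w}) (huw : u ≠ w) :
    c u ≠ c w := by
  obtain ⟨a, b, ha, hb, hab⟩ := hc.2 v (by rw [hv, Set.ncard_pair huw])
  have ha' : a = u ∨ a = w := by simpa [← mem_neighborSet, hv] using ha
  have hb' : b = u ∨ b = w := by simpa [← mem_neighborSet, hv] using hb
  rcases ha' with rfl | rfl <;> rcases hb' with rfl | rfl
  · exact absurd rfl hab
  · exact hab
  · exact hab.symm
  · exact absurd rfl hab

end DynamicColoring

lemma SimpleGraph.Subgraph.exists_mem_verts_ncard_neighborSet_le_two {V : Type} [Finite V]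
    {G : SimpleGraph V}
    (hG : ∀ u v, G.Adj u v → (G.neighborSet u).ncard ≤ 2 ∨ (G.neighborSet v).ncard ≤ 2)
    (H : G.Subgraph) (hH : H.verts.Nonempty) :
    ∃ v ∈ H.verts, (H.neighborSet v).ncard ≤ 2 := by
  have neighborSet_le (v : V) : (H.neighborSet v).ncard ≤ (G.neighborSet v).ncard :=
    Set.ncard_le_ncard (H.neighborSet_subset v) (Set.toFinite _)
  by_cases hedge : ∃ u v, H.Adj u v
  · obtain ⟨u, v, huv⟩ := hedge
    rcases hG u v (H.adj_sub huv) with hu | hv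
    · exact ⟨u, H.edge_vert huv, (neighborSet_le u).trans hu⟩
    · exact ⟨v, H.edge_vert huv.symm, (neighborSet_le v).trans hv⟩
  · obtain ⟨v, hv⟩ := hH
    have hempty : H.neighborSet v = ∅ :=
      Set.eq_empty_of_forall_notMem fun w hw => hedge ⟨v, w, hw⟩
    exact ⟨v, hv, by simp [hempty]⟩

section SubdividedComplete

variable {n : ℕ}

lemma subdividedComplete_neighborSet_inr (e : {p : Fin n × Fin n // p.1 < p.2}) :
    (subdividedComplete n).neighborSet (Sum.inr e) = {Sum.inl e.val.1, Sum.inl e.val.2} := by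
  ext (v | f) <;> simp [subdividedComplete, eq_comm]

lemma subdividedComplete_not_adj_inl_inl (v w : Fin n) :
    ¬ (subdividedComplete n).Adj (Sum.inl v) (Sum.inl w) := by
  simp [subdividedComplete]

lemma subdividedComplete_ncard_neighborSet_inr (e : {p : Fin n × Fin n // p.1 < p.2}) :
    ((subdividedComplete n).neighborSet (Sum.inr e)).ncard ≤ 2 := by
  rw [subdividedComplete_neighborSet_inr]
  exact (Set.ncard_insert_le _ _).trans (by rw [Set.ncard_singleton])

lemma subdividedComplete_adj_ncard_le_two {x y : Fin n ⊕ {p : Fin n × Fin n // p.1 < p.2}}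
    (hxy : (subdividedComplete n).Adj x y) :
    ((subdividedComplete n).neighborSet x).ncard ≤ 2 ∨
      ((subdividedComplete n).neighborSet y).ncard ≤ 2 := by
  rcases x with v | e
  · rcases y with w | f
    · exact absurd hxy (subdividedComplete_not_adj_inl_inl v w)
    · exact Or.inr (subdividedComplete_ncard_neighborSet_inr f)
  · exact Or.inl (subdividedComplete_ncard_neighborSet_inr e)

lemma IsDynamicColoring.injective_comp_inl {k : ℕ}
    {c : Fin n ⊕ {p : Fin n × Fin n // p.1 < p.2} → Fin k}
    (hc : IsDynamicColoring (subdividedComplete n) c) : Function.Injective (c ∘ Sum.inl) := by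
  have distinct_of_lt {u v : Fin n} (huv : u < v) : c (Sum.inl u) ≠ c (Sum.inl v) :=
    hc.ne_of_neighborSet_eq_pair (subdividedComplete_neighborSet_inr ⟨(u, v), huv⟩)
      (Sum.inl_injective.ne huv.ne)
  intro u v huv
  by_contra hne
  rcases lt_or_gt_of_ne hne with h | h
  · exact distinct_of_lt h huv
  · exact distinct_of_lt h huv.symm

end SubdividedComplete

theorem subdivided_complete_dynamic_chromatic_number_general (n : ℕ) :
    n ≤ dynamicChromaticNumber (subdividedComplete n) ∧
      ∀ H : (subdividedComplete n).Subgraph, H.verts.Nonempty →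
        ∃ v ∈ H.verts, (H.neighborSet v).ncard ≤ 2 := by
  refine ⟨le_dynamicChromaticNumber fun k c hc => ?_,
    Subgraph.exists_mem_verts_ncard_neighborSet_le_two
      fun _ _ => subdividedComplete_adj_ncard_le_two⟩
  simpa using Fintype.card_le_of_injective _ hc.injective_comp_inl

/-- The graph obtained from `K n` by subdividing every edge once has dynamic chromatic
number at least `n`, while it is `2`-degenerate. -/
theorem subdivided_complete_dynamic_chromatic_number (n : ℕ) (hn : 1 ≤ n) :
    n ≤ dynamicChromaticNumber (subdividedComplete n) ∧
      ∀ H : (subdividedComplete n).Subgraph, H.verts.Nonempty →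
        ∃ v ∈ H.verts, (H.neighborSet v).ncard ≤ 2 :=
  subdivided_complete_dynamic_chromatic_number_general n
end
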